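/- arXiv:1310.2347 — 8 statements merged into one kernel-verified Lean document; each statement's English description precedes it below -/
import Mathlib

section
/- Let h > 0. (i) If S_1'(ε) < +∞ for all ε > 0, then for each h > 0 we have S_h'(ε) < +∞ for all ε > 0. (ii) If there exists ε' > 0 such that S_1'(ε) < +∞ for all ε > ε' and S_1'(ε) = +∞ for all ε < ε', then for each h > 0 there exists ε_h' > 0 such that S_h'(ε) < +∞ for all ε > ε_h' and S_h'(ε) = +∞ for all ε < ε_h'. (iii) If S_1'(ε) = +∞ for all ε > 0, then for each h > 0 we have S_h'(ε) = +∞ for all ε > 0. -/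
open MeasureTheory Filter

/-- The squared Frobenius norm of `σ(s)`. -/
noncomputable def F2 {d r : ℕ} (σ : ℝ → Matrix (Fin d) (Fin r) ℝ) (s : ℝ) : ℝ :=
  ∑ i : Fin d, ∑ j : Fin r, (σ s i j) ^ 2

/-- `θ_h(n)² = ∫_{nh}^{(n+1)h} ‖σ(s)‖_F² ds`. -/
noncomputable def theta2 {d r : ℕ} (σ : ℝ → Matrix (Fin d) (Fin r) ℝ) (h : ℝ) (n : ℕ) : ℝ :=
  ∫ s in ((n : ℝ) * h)..(((n : ℝ) + 1) * h), F2 σ s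

/-- The `n`-th summand of `S_h'(ε)`, taken to be `0` when `θ_h(n) = 0`. -/
noncomputable def Sterm {d r : ℕ} (σ : ℝ → Matrix (Fin d) (Fin r) ℝ) (h ε : ℝ) (n : ℕ) : ℝ :=
  if theta2 σ h n = 0 then 0
  else Real.sqrt (theta2 σ h n) * Real.exp (-(ε ^ 2) / (2 * theta2 σ h n))

/-- `S_h'(ε) = ∑_{n=1}^∞ θ_h(n) exp(-ε²/(2θ_h(n)²)) < +∞`.
Since all summands are nonnegative, finiteness is expressed as summability. -/
def SFinite {d r : ℕ} (σ : ℝ → Matrix (Fin d) (Fin r) ℝ) (h ε : ℝ) : Prop :=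
  Summable fun n : ℕ => Sterm σ h ε (n + 1)

section helpers
variable {d r : ℕ} {σ : ℝ → Matrix (Fin d) (Fin r) ℝ}

lemma F2_nonneg (σ : ℝ → Matrix (Fin d) (Fin r) ℝ) (s : ℝ) : 0 ≤ F2 σ s := by
  unfold F2
  apply Finset.sum_nonneg; intro i _
  apply Finset.sum_nonneg; intro j _
  positivity

lemma F2_continuousOn (hσ : ContinuousOn σ (Set.Ici 0)) :
    ContinuousOn (F2 σ) (Set.Ici 0) := by
  unfold F2
  apply continuousOn_finset_sum; intro i _
  apply continuousOn_finset_sum; intro j _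
  exact (((continuous_apply j).comp (continuous_apply i)).comp_continuousOn hσ).pow 2

lemma F2_intervalIntegrable (hσ : ContinuousOn σ (Set.Ici 0)) {a b : ℝ}
    (ha : 0 ≤ a) (hb : 0 ≤ b) : IntervalIntegrable (F2 σ) volume a b := by
  apply ContinuousOn.intervalIntegrable
  apply (F2_continuousOn hσ).mono
  intro x hx
  exact le_trans (le_inf ha hb) hx.1

lemma theta2_nonneg (σ : ℝ → Matrix (Fin d) (Fin r) ℝ) {h : ℝ} (hh : 0 ≤ h) (n : ℕ) :
    0 ≤ theta2 σ h n := by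
  apply intervalIntegral.integral_nonneg
  · nlinarith
  · intro u _; exact F2_nonneg σ u

lemma Sterm_nonneg (σ : ℝ → Matrix (Fin d) (Fin r) ℝ) (h ε : ℝ) (n : ℕ) :
    0 ≤ Sterm σ h ε n := by
  unfold Sterm
  split
  · exact le_rfl
  · positivity

lemma sum_theta2 (hσ : ContinuousOn σ (Set.Ici 0)) {h : ℝ} (hh : 0 < h) (m : ℕ) :
    ∀ N : ℕ, ∑ i ∈ Finset.range N, theta2 σ h (m + i)
      = ∫ s in ((m : ℝ) * h)..(((m : ℝ) + N) * h), F2 σ s := by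
  intro N
  induction N with
  | zero => simp
  | succ N ih =>
      rw [Finset.sum_range_succ, ih]
      have hint1 : IntervalIntegrable (F2 σ) volume ((m : ℝ) * h) (((m : ℝ) + N) * h) :=
        F2_intervalIntegrable hσ (by positivity) (by positivity)
      have hint2 : IntervalIntegrable (F2 σ) volume (((m : ℝ) + N) * h) (((m : ℝ) + (N + 1)) * h) :=
        F2_intervalIntegrable hσ (by positivity) (by positivity)
      have key := intervalIntegral.integral_add_adjacent_intervals hint1 hint2
      have : theta2 σ h (m + N) = ∫ s in (((m : ℝ) + N) * h)..(((m : ℝ) + (N + 1)) * h), F2 σ s := by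
        unfold theta2; push_cast; ring_nf
      rw [this]
      push_cast
      push_cast at key
      linarith [key]

lemma term_mono {x y c : ℝ} (hx : 0 < x) (hxy : x ≤ y) (hc : 0 < c) :
    Real.sqrt x * Real.exp (-c / (2 * x)) ≤ Real.sqrt y * Real.exp (-c / (2 * y)) := by
  have hy : 0 < y := lt_of_lt_of_le hx hxy
  have h1 : Real.sqrt x ≤ Real.sqrt y := Real.sqrt_le_sqrt hxy
  have h2 : -c / (2 * x) ≤ -c / (2 * y) := by
    rw [neg_div, neg_div, neg_le_neg_iff]
    apply div_le_div_of_nonneg_left hc.le (by linarith) (by linarith)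
  exact mul_le_mul h1 (Real.exp_le_exp.2 h2) (Real.exp_nonneg _) (Real.sqrt_nonneg _)

lemma fiber_card {h k : ℝ} (hh : 0 < h) (hk : 0 < k) (t : Finset ℕ) (j : ℕ)
    (ht : ∀ n ∈ t, ⌊((n : ℝ) * k) / h⌋₊ = j) :
    t.card ≤ ⌊h / k⌋₊ + 1 := by
  set a : ℕ := ⌈((j : ℝ) * h) / k⌉₊
  have hsub : t ⊆ Finset.Ico a (a + (⌊h / k⌋₊ + 1)) := by
    intro n hn
    have hfl := ht n hn
    have hpos : (0 : ℝ) ≤ ((n : ℝ) * k) / h := by positivity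
    have h1 : (j : ℝ) ≤ ((n : ℝ) * k) / h := by
      rw [← hfl]; exact Nat.floor_le hpos
    have h2 : ((n : ℝ) * k) / h < (j : ℝ) + 1 := by
      rw [← hfl]; exact Nat.lt_floor_add_one _
    rw [Finset.mem_Ico]
    constructor
    · rw [Nat.ceil_le]
      rw [div_le_iff₀ hk]
      rw [le_div_iff₀ hh] at h1
      nlinarith
    · have hlow : ((j : ℝ) * h) / k ≤ (a : ℝ) := Nat.le_ceil _
      have hfk : h / k < (⌊h / k⌋₊ : ℝ) + 1 := Nat.lt_floor_add_one _
      have hn2 : (n : ℝ) < ((j : ℝ) + 1) * h / k := by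
        rw [div_lt_iff₀ hh] at h2
        rw [lt_div_iff₀ hk]
        nlinarith
      have : (n : ℝ) < (a : ℝ) + ((⌊h / k⌋₊ : ℝ) + 1) := by
        have : ((j : ℝ) + 1) * h / k = (j : ℝ) * h / k + h / k := by ring
        rw [this] at hn2
        linarith
      exact_mod_cast this
  calc t.card ≤ (Finset.Ico a (a + (⌊h / k⌋₊ + 1))).card := Finset.card_le_card hsub
    _ = ⌊h / k⌋₊ + 1 := by rw [Nat.card_Ico]; omega

lemma per_term (hσ : ContinuousOn σ (Set.Ici 0)) {h k : ℝ} (hh : 0 < h) (hk : 0 < k)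
    {ε : ℝ} (hε : 0 < ε) (n : ℕ) :
    Sterm σ k (Real.sqrt ((⌈k / h⌉₊ + 1 : ℕ) : ℝ) * ε) n
      ≤ Real.sqrt ((⌈k / h⌉₊ + 1 : ℕ) : ℝ) *
        ∑ i ∈ Finset.range (⌈k / h⌉₊ + 1), Sterm σ h ε (⌊((n : ℝ) * k) / h⌋₊ + i) := by
  set N : ℕ := ⌈k / h⌉₊ + 1 with hN
  set m : ℕ := ⌊((n : ℝ) * k) / h⌋₊ with hm
  have hNpos : (0 : ℝ) < (N : ℝ) := by positivity
  have hRHSnn : 0 ≤ Real.sqrt (N : ℝ) * ∑ i ∈ Finset.range N, Sterm σ h ε (m + i) := by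
    apply mul_nonneg (Real.sqrt_nonneg _)
    exact Finset.sum_nonneg fun i _ => Sterm_nonneg σ h ε _
  set T := theta2 σ k n with hT
  by_cases hT0 : T = 0
  · rw [Sterm, if_pos hT0]; exact hRHSnn
  have hTpos : 0 < T := lt_of_le_of_ne (theta2_nonneg σ hk.le n) (Ne.symm hT0)
  -- T ≤ sum of theta2 at scale h
  have hcover : T ≤ ∑ i ∈ Finset.range N, theta2 σ h (m + i) := by
    rw [sum_theta2 hσ hh]
    have hmle : (m : ℝ) * h ≤ (n : ℝ) * k := by
      have := Nat.floor_le (show (0:ℝ) ≤ ((n : ℝ) * k) / h by positivity)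
      rw [← le_div_iff₀ hh]
      exact this
    have hup : ((n : ℝ) + 1) * k ≤ ((m : ℝ) + N) * h := by
      have h1 : (n : ℝ) * k < ((m : ℝ) + 1) * h := by
        have := Nat.lt_floor_add_one (((n : ℝ) * k) / h)
        rw [div_lt_iff₀ hh] at this
        linarith [this]
      have h2 : k ≤ (⌈k / h⌉₊ : ℝ) * h := by
        have := Nat.le_ceil (k / h)
        rw [div_le_iff₀ hh] at this
        linarith
      have hcast : (N : ℝ) = (⌈k / h⌉₊ : ℝ) + 1 := by rw [hN]; push_cast; ring
      nlinarith
    apply intervalIntegral.integral_mono_interval hmle (by nlinarith) hup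
    · exact Eventually.of_forall fun s => F2_nonneg σ s
    · exact F2_intervalIntegrable hσ (by positivity) (by positivity)
  -- pigeonhole
  obtain ⟨i, hiN, hi⟩ : ∃ i ∈ Finset.range N, T / N ≤ theta2 σ h (m + i) := by
    apply Finset.exists_le_of_sum_le ⟨0, Finset.mem_range.2 (Nat.succ_pos _)⟩
    rw [Finset.sum_const, Finset.card_range, nsmul_eq_mul]
    rw [mul_div_cancel₀ _ (ne_of_gt hNpos)]
    exact hcover
  set x := theta2 σ h (m + i) with hx
  have hxpos : 0 < x := lt_of_lt_of_le (by positivity) hi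
  have hTNx : T ≤ (N : ℝ) * x := by
    rw [div_le_iff₀ hNpos] at hi; linarith [hi]
  have hsq : (Real.sqrt (N : ℝ) * ε) ^ 2 = (N : ℝ) * ε ^ 2 := by
    rw [mul_pow, Real.sq_sqrt hNpos.le]
  have hstep : Sterm σ k (Real.sqrt (N : ℝ) * ε) n ≤ Real.sqrt (N : ℝ) * Sterm σ h ε (m + i) := by
    rw [Sterm, if_neg hT0, Sterm, if_neg (ne_of_gt hxpos), hsq]
    calc Real.sqrt T * Real.exp (-((N : ℝ) * ε ^ 2) / (2 * T))
        ≤ Real.sqrt ((N : ℝ) * x) * Real.exp (-((N : ℝ) * ε ^ 2) / (2 * ((N : ℝ) * x))) :=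
          term_mono hTpos hTNx (by positivity)
      _ = Real.sqrt (N : ℝ) * (Real.sqrt x * Real.exp (-ε ^ 2 / (2 * x))) := by
          rw [Real.sqrt_mul hNpos.le]
          have : -((N : ℝ) * ε ^ 2) / (2 * ((N : ℝ) * x)) = -ε ^ 2 / (2 * x) := by
            field_simp
          rw [this]; ring
  refine hstep.trans ?_
  apply mul_le_mul_of_nonneg_left _ (Real.sqrt_nonneg _)
  exact Finset.single_le_sum (fun j _ => Sterm_nonneg σ h ε _) hiN

lemma comparison (hσ : ContinuousOn σ (Set.Ici 0)) {h k : ℝ} (hh : 0 < h) (hk : 0 < k)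
    {ε : ℝ} (hε : 0 < ε) (H : Summable fun n : ℕ => Sterm σ h ε n) :
    Summable fun n : ℕ => Sterm σ k (Real.sqrt ((⌈k / h⌉₊ + 1 : ℕ) : ℝ) * ε) n := by
  set N : ℕ := ⌈k / h⌉₊ + 1 with hN
  set φ : ℕ → ℕ := fun n => ⌊((n : ℝ) * k) / h⌋₊ with hφ
  set G : ℕ → ℝ := fun m => Sterm σ h ε m with hG
  have hGnn : ∀ m, 0 ≤ G m := fun m => Sterm_nonneg σ h ε m
  set M : ℕ := ⌊h / k⌋₊ + 1 with hM
  have hmaj : ∀ i : ℕ, Summable fun n => G (φ n + i) := by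
    intro i
    apply summable_of_sum_le (fun n => hGnn _)
    intro u
    calc ∑ n ∈ u, G (φ n + i)
        = ∑ b ∈ u.image (fun n => φ n + i),
            (u.filter (fun n => φ n + i = b)).card • G b := Finset.sum_comp G _
      _ ≤ ∑ b ∈ u.image (fun n => φ n + i), (M : ℝ) * G b := by
          apply Finset.sum_le_sum
          intro b _
          rw [nsmul_eq_mul]
          apply mul_le_mul_of_nonneg_right _ (hGnn b)
          have hcard : (u.filter (fun n => φ n + i = b)).card ≤ M := by
            by_cases hbi : i ≤ b
            · apply fiber_card hh hk _ (b - i)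
              intro n hn
              have h2 := (Finset.mem_filter.1 hn).2
              simp only [hφ] at h2
              omega
            · have hemp : u.filter (fun n => φ n + i = b) = ∅ := by
                apply Finset.filter_false_of_mem
                intro n hn hc
                omega
              rw [hemp, Finset.card_empty]
              exact Nat.zero_le _
          exact_mod_cast hcard
      _ = (M : ℝ) * ∑ b ∈ u.image (fun n => φ n + i), G b := by rw [Finset.mul_sum]
      _ ≤ (M : ℝ) * ∑' m, G m := by
          apply mul_le_mul_of_nonneg_left _ (by positivity)
          exact Summable.sum_le_tsum _ (fun m _ => hGnn m) H
  have hsum : Summable fun n => Real.sqrt (N : ℝ) * ∑ i ∈ Finset.range N, G (φ n + i) := by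
    apply Summable.mul_left
    exact summable_sum fun i _ => hmaj i
  apply Summable.of_nonneg_of_le (fun n => Sterm_nonneg σ k _ n) _ hsum
  intro n
  exact per_term hσ hh hk hε n

lemma sqrtN_pos (q : ℕ) : (0 : ℝ) < Real.sqrt ((q + 1 : ℕ) : ℝ) :=
  Real.sqrt_pos.2 (by exact_mod_cast Nat.succ_pos q)

lemma SFinite_trans (hσ : ContinuousOn σ (Set.Ici 0)) {h k : ℝ} (hh : 0 < h) (hk : 0 < k)
    {ε : ℝ} (hε : 0 < ε) (H : SFinite σ h ε) :
    SFinite σ k (Real.sqrt ((⌈k / h⌉₊ + 1 : ℕ) : ℝ) * ε) := by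
  have H' : Summable fun n : ℕ => Sterm σ h ε n := (summable_nat_add_iff 1).1 H
  exact (summable_nat_add_iff 1).2 (comparison hσ hh hk hε H')

lemma SFinite_mono {h : ℝ} (hh : 0 < h) {ε₁ ε₂ : ℝ} (h1 : 0 < ε₁) (h12 : ε₁ ≤ ε₂)
    (H : SFinite σ h ε₁) : SFinite σ h ε₂ := by
  apply Summable.of_nonneg_of_le (fun n => Sterm_nonneg σ h ε₂ _) _ H
  intro n
  unfold Sterm
  split
  · exact le_rfl
  · rename_i hne
    have hT : 0 < theta2 σ h (n + 1) := lt_of_le_of_ne (theta2_nonneg σ hh.le _) (Ne.symm hne)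
    apply mul_le_mul_of_nonneg_left _ (Real.sqrt_nonneg _)
    apply Real.exp_le_exp.2
    rw [neg_div, neg_div, neg_le_neg_iff]
    apply div_le_div_of_nonneg_right (by nlinarith) (by positivity)

lemma key_transfer (hσ : ContinuousOn σ (Set.Ici 0)) {h k : ℝ} (hh : 0 < h) (hk : 0 < k)
    {ε : ℝ} (hε : 0 < ε)
    (H : SFinite σ h (ε / Real.sqrt ((⌈k / h⌉₊ + 1 : ℕ) : ℝ))) : SFinite σ k ε := by
  have hs : (0 : ℝ) < Real.sqrt ((⌈k / h⌉₊ + 1 : ℕ) : ℝ) := sqrtN_pos _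
  have := SFinite_trans hσ hh hk (by positivity) H
  rwa [mul_comm, div_mul_cancel₀ ε (ne_of_gt hs)] at this

end helpers

theorem stmt_0 (d r : ℕ) (hd : 1 ≤ d) (hr : 1 ≤ r)
    (σ : ℝ → Matrix (Fin d) (Fin r) ℝ) (hσ : ContinuousOn σ (Set.Ici 0)) :
    ((∀ ε : ℝ, 0 < ε → SFinite σ 1 ε) →
      ∀ h : ℝ, 0 < h → ∀ ε : ℝ, 0 < ε → SFinite σ h ε) ∧
    ((∃ ε' : ℝ, 0 < ε' ∧ (∀ ε : ℝ, ε' < ε → SFinite σ 1 ε) ∧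
        (∀ ε : ℝ, 0 < ε → ε < ε' → ¬ SFinite σ 1 ε)) →
      ∀ h : ℝ, 0 < h → ∃ εh : ℝ, 0 < εh ∧ (∀ ε : ℝ, εh < ε → SFinite σ h ε) ∧
        (∀ ε : ℝ, 0 < ε → ε < εh → ¬ SFinite σ h ε)) ∧
    ((∀ ε : ℝ, 0 < ε → ¬ SFinite σ 1 ε) →
      ∀ h : ℝ, 0 < h → ∀ ε : ℝ, 0 < ε → ¬ SFinite σ h ε) := by
  refine ⟨?_, ?_, ?_⟩
  · -- (i)
    intro H1 h hh ε hε
    have hs : (0 : ℝ) < Real.sqrt ((⌈h / 1⌉₊ + 1 : ℕ) : ℝ) := sqrtN_pos _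
    exact key_transfer hσ one_pos hh hε (H1 _ (by positivity))
  · -- (ii)
    rintro ⟨ε', hε', hfin, hinf⟩ h hh
    set c1 : ℝ := Real.sqrt ((⌈h / 1⌉₊ + 1 : ℕ) : ℝ) with hc1def
    set c2 : ℝ := Real.sqrt ((⌈1 / h⌉₊ + 1 : ℕ) : ℝ) with hc2def
    have hc1 : 0 < c1 := sqrtN_pos _
    have hc2 : 0 < c2 := sqrtN_pos _
    set E : Set ℝ := {ε | 0 < ε ∧ SFinite σ h ε} with hE
    have hne : (c1 * (ε' + 1)) ∈ E := by
      constructor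
      · positivity
      · exact SFinite_trans hσ one_pos hh (by linarith) (hfin _ (by linarith))
    have hlb : ∀ x ∈ E, ε' / c2 ≤ x := by
      intro x hx
      by_contra hlt
      push_neg at hlt
      have hxfin : SFinite σ 1 (c2 * x) := SFinite_trans hσ hh one_pos hx.1 hx.2
      have hxlt : c2 * x < ε' := by
        rw [lt_div_iff₀ hc2] at hlt
        linarith [hlt, mul_comm x c2]
      exact hinf (c2 * x) (mul_pos hc2 hx.1) hxlt hxfin
    have hbdd : BddBelow E := ⟨ε' / c2, hlb⟩
    refine ⟨sInf E, lt_of_lt_of_le (by positivity) (le_csInf ⟨_, hne⟩ hlb), ?_, ?_⟩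
    · intro ε hlt
      obtain ⟨x, hxE, hxlt⟩ := exists_lt_of_csInf_lt ⟨_, hne⟩ hlt
      exact SFinite_mono hh hxE.1 hxlt.le hxE.2
    · intro ε hpos hlt HF
      exact absurd (csInf_le hbdd ⟨hpos, HF⟩) (not_le.2 hlt)
  · -- (iii)
    intro H1 h hh ε hε HF
    exact H1 _ (mul_pos (sqrtN_pos _) hε) (SFinite_trans hσ hh one_pos hε HF)
end

section
/- Suppose φ₁ : [0,∞) → ℝ is locally Lipschitz continuous with φ₁(0) = 0 and φ₁(x) > 0 for all x > 0. Then the function φ₂ : [0,∞) → ℝ defined by φ₂(x) = √x · φ₁(√x) is locally Lipschitz continuous on [0,∞). -/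
/-- A function on `[0,∞)` is locally Lipschitz if it is Lipschitz on every compact
subinterval of `[0,∞)`; equivalently, Lipschitz on `[0,b]` for every `b ≥ 0`. -/
theorem stmt_2 (φ₁ : ℝ → ℝ)
    (hlip : ∀ b : ℝ, 0 ≤ b → ∃ K : NNReal, LipschitzOnWith K φ₁ (Set.Icc 0 b))
    (h0 : φ₁ 0 = 0) (hpos : ∀ x : ℝ, 0 < x → 0 < φ₁ x) :
    ∀ b : ℝ, 0 ≤ b → ∃ K : NNReal,
      LipschitzOnWith K (fun x : ℝ => Real.sqrt x * φ₁ (Real.sqrt x)) (Set.Icc 0 b) := by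
  intro b hb
  obtain ⟨K, hK⟩ := hlip (Real.sqrt b) (Real.sqrt_nonneg b)
  refine ⟨2 * K, LipschitzOnWith.of_dist_le_mul fun x hx y hy => ?_⟩
  obtain ⟨hx0, hxb⟩ := hx
  obtain ⟨hy0, hyb⟩ := hy
  have hsx : Real.sqrt x ∈ Set.Icc 0 (Real.sqrt b) :=
    ⟨Real.sqrt_nonneg x, Real.sqrt_le_sqrt hxb⟩
  have hsy : Real.sqrt y ∈ Set.Icc 0 (Real.sqrt b) :=
    ⟨Real.sqrt_nonneg y, Real.sqrt_le_sqrt hyb⟩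
  have h0' : (0:ℝ) ∈ Set.Icc 0 (Real.sqrt b) := ⟨le_refl 0, Real.sqrt_nonneg b⟩
  have h1 : |φ₁ (Real.sqrt x) - φ₁ (Real.sqrt y)| ≤ K * |Real.sqrt x - Real.sqrt y| := by
    have := hK.dist_le_mul _ hsx _ hsy
    simpa [Real.dist_eq] using this
  have h2 : |φ₁ (Real.sqrt y)| ≤ K * Real.sqrt y := by
    have := hK.dist_le_mul _ hsy _ h0'
    simpa [h0, Real.dist_eq, abs_of_nonneg (Real.sqrt_nonneg y)] using this
  have key : ∀ u v : ℝ, 0 ≤ u → 0 ≤ v →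
      Real.sqrt u * |Real.sqrt u - Real.sqrt v| ≤ |u - v| := by
    intro u v hu hv
    have hid : |Real.sqrt u - Real.sqrt v| * (Real.sqrt u + Real.sqrt v) = |u - v| := by
      rw [← abs_of_nonneg (add_nonneg (Real.sqrt_nonneg u) (Real.sqrt_nonneg v)), ← abs_mul]
      congr 1
      have h : (Real.sqrt u - Real.sqrt v) * (Real.sqrt u + Real.sqrt v) =
          Real.sqrt u * Real.sqrt u - Real.sqrt v * Real.sqrt v := by ring
      rw [h, Real.mul_self_sqrt hu, Real.mul_self_sqrt hv]
    calc Real.sqrt u * |Real.sqrt u - Real.sqrt v|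
        ≤ (Real.sqrt u + Real.sqrt v) * |Real.sqrt u - Real.sqrt v| := by
          apply mul_le_mul_of_nonneg_right _ (abs_nonneg _)
          linarith [Real.sqrt_nonneg v]
      _ = |u - v| := by rw [mul_comm]; exact hid
  have keyx := key x y hx0 hy0
  have keyy : Real.sqrt y * |Real.sqrt x - Real.sqrt y| ≤ |x - y| := by
    have := key y x hy0 hx0
    rwa [abs_sub_comm, abs_sub_comm y x] at this
  have tri : |Real.sqrt x * φ₁ (Real.sqrt x) - Real.sqrt y * φ₁ (Real.sqrt y)| ≤
      Real.sqrt x * |φ₁ (Real.sqrt x) - φ₁ (Real.sqrt y)| +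
      |Real.sqrt x - Real.sqrt y| * |φ₁ (Real.sqrt y)| := by
    have hdecomp : Real.sqrt x * φ₁ (Real.sqrt x) - Real.sqrt y * φ₁ (Real.sqrt y) =
        Real.sqrt x * (φ₁ (Real.sqrt x) - φ₁ (Real.sqrt y)) +
        (Real.sqrt x - Real.sqrt y) * φ₁ (Real.sqrt y) := by ring
    rw [hdecomp]
    calc _ ≤ |Real.sqrt x * (φ₁ (Real.sqrt x) - φ₁ (Real.sqrt y))| +
        |(Real.sqrt x - Real.sqrt y) * φ₁ (Real.sqrt y)| := abs_add_le _ _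
      _ = _ := by rw [abs_mul, abs_mul, abs_of_nonneg (Real.sqrt_nonneg x)]
  have hA : Real.sqrt x * |φ₁ (Real.sqrt x) - φ₁ (Real.sqrt y)| ≤ K * |x - y| := by
    calc Real.sqrt x * |φ₁ (Real.sqrt x) - φ₁ (Real.sqrt y)|
        ≤ Real.sqrt x * (K * |Real.sqrt x - Real.sqrt y|) :=
          mul_le_mul_of_nonneg_left h1 (Real.sqrt_nonneg x)
      _ = K * (Real.sqrt x * |Real.sqrt x - Real.sqrt y|) := by ring
      _ ≤ K * |x - y| := mul_le_mul_of_nonneg_left keyx K.coe_nonneg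
  have hB : |Real.sqrt x - Real.sqrt y| * |φ₁ (Real.sqrt y)| ≤ K * |x - y| := by
    calc |Real.sqrt x - Real.sqrt y| * |φ₁ (Real.sqrt y)|
        ≤ |Real.sqrt x - Real.sqrt y| * (K * Real.sqrt y) :=
          mul_le_mul_of_nonneg_left h2 (abs_nonneg _)
      _ = K * (Real.sqrt y * |Real.sqrt x - Real.sqrt y|) := by ring
      _ ≤ K * |x - y| := mul_le_mul_of_nonneg_left keyy K.coe_nonneg
  simp only [Real.dist_eq]
  push_cast
  linarith
end

section
/- If liminf_{t→∞} ‖z(t)‖ < +∞, then limsup_{t→∞} ‖z(t)‖ < +∞. -/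
/-!
The closed ball of any radius `r > 0` is eventually forward-invariant. On the sphere of radius `r`
the field `x ↦ -f (x + y) + y` points strictly inward for `y = 0`, hence, the sphere being compact,
for all small `y`; once `‖Y t‖` is that small, `‖z t‖ ^ 2` is strictly decreasing whenever
`‖z t‖ = r` and so can never cross `r ^ 2`. Taking `r` above the `liminf`, some such late time has
`‖z t‖ ≤ r`, and `z` stays in the ball from then on.
-/

open Filter Topology
open scoped RealInnerProductSpace ENNReal

section

variable {E : Type*} [NormedAddCommGroup E] [InnerProductSpace ℝ E]

theorem IsCompact.eventually_forall_inner_neg_add_lt_zero {K : Set E} (hK : IsCompact K)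
    {f : E → E} (hf : Continuous f) (hpos : ∀ x ∈ K, 0 < ⟪x, f x⟫) :
    ∀ᶠ y in 𝓝 (0 : E), ∀ x ∈ K, ⟪x, -f (x + y) + y⟫ < 0 := by
  refine hK.eventually_forall_of_forall_eventually fun x hx => ?_
  have hcont : Continuous fun p : E × E => ⟪p.2, -f (p.2 + p.1) + p.1⟫ := by fun_prop
  have hneg : ⟪x, -f (x + 0) + 0⟫ < 0 := by
    simpa [inner_neg_right] using hpos x hx
  exact (hcont.tendsto (0, x)).eventually (gt_mem_nhds hneg)

theorem norm_le_of_inner_neg_of_norm_eq {z z' : ℝ → E} {t₀ r : ℝ}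
    (hz : ∀ t, t₀ ≤ t → HasDerivAt z (z' t) t)
    (hsphere : ∀ t, t₀ ≤ t → ‖z t‖ = r → ⟪z t, z' t⟫ < 0)
    (h₀ : ‖z t₀‖ ≤ r) {t : ℝ} (ht : t₀ ≤ t) : ‖z t‖ ≤ r := by
  have hr : 0 ≤ r := (norm_nonneg _).trans h₀
  have hsq : ‖z t‖ ^ 2 ≤ r ^ 2 := by
    refine image_le_of_deriv_right_lt_deriv_boundary' (a := t₀) (b := t) (f := (‖z ·‖ ^ 2))
      (f' := fun s => 2 * ⟪z s, z' s⟫) ?_ (fun s hs => ?_) (by gcongr)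
      continuousOn_const (fun s _ => hasDerivWithinAt_const s _ (r ^ 2)) (fun s hs hs_eq => ?_)
      ⟨ht, le_rfl⟩
    · exact fun s hs => (hz s hs.1).norm_sq.continuousAt.continuousWithinAt
    · exact (hz s hs.1).norm_sq.hasDerivWithinAt
    · have hnorm : ‖z s‖ = r := (pow_left_inj₀ (norm_nonneg _) hr two_ne_zero).1 hs_eq
      linarith [hsphere s hs.1 hnorm]
  exact (pow_le_pow_iff_left₀ (norm_nonneg _) hr two_ne_zero).1 hsq

theorem eventually_forall_norm_le_of_norm_le [ProperSpace E] {f : E → E} (hf : Continuous f)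
    (hdiss : ∀ x : E, x ≠ 0 → 0 < ⟪x, f x⟫) {Y z : ℝ → E} (hY : Tendsto Y atTop (𝓝 0))
    (hz : ∀ t : ℝ, 0 ≤ t → HasDerivAt z (-f (z t + Y t) + Y t) t) {r : ℝ} (hr : 0 < r) :
    ∀ᶠ t₀ in atTop, ‖z t₀‖ ≤ r → ∀ t, t₀ ≤ t → ‖z t‖ ≤ r := by
  have hinward := hY.eventually <| (isCompact_sphere (0 : E) r).eventually_forall_inner_neg_add_lt_zero
    hf fun x hx => hdiss x (Metric.ne_of_mem_sphere hx hr.ne')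
  obtain ⟨T, hT⟩ := eventually_atTop.1 hinward
  filter_upwards [eventually_ge_atTop (max T 0)] with t₀ ht₀ h₀ t ht
  refine norm_le_of_inner_neg_of_norm_eq (fun s hs => hz s ?_) (fun s hs hs_eq => ?_) h₀ ht
  · exact (le_max_right T 0).trans (ht₀.trans hs)
  · exact hT s ((le_max_left T 0).trans (ht₀.trans hs)) (z s) (by simpa using hs_eq)

end

theorem exists_pos_frequently_norm_lt_of_liminf_nnnorm_lt_top {α E : Type*} [NormedAddCommGroup E]
    {l : Filter α} {g : α → E} (h : liminf (fun t => (‖g t‖₊ : ℝ≥0∞)) l < ⊤) :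
    ∃ r : ℝ, 0 < r ∧ ∃ᶠ t in l, ‖g t‖ < r := by
  obtain ⟨r, hlt, -⟩ := ENNReal.lt_iff_exists_nnreal_btwn.1 h
  refine ⟨r, ?_, (frequently_lt_of_liminf_lt (by isBoundedDefault) hlt).mono fun t ht => ?_⟩
  · exact_mod_cast pos_of_gt hlt
  · exact_mod_cast ht

theorem limsup_nnnorm_lt_top_of_eventually_norm_le {α E : Type*} [NormedAddCommGroup E]
    {l : Filter α} {g : α → E} {r : ℝ} (h : ∀ᶠ t in l, ‖g t‖ ≤ r) :
    limsup (fun t => (‖g t‖₊ : ℝ≥0∞)) l < ⊤ := by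
  refine (limsup_le_of_le (a := ENNReal.ofReal r) (by isBoundedDefault) (h.mono fun t ht => ?_)).trans_lt
    ENNReal.ofReal_lt_top
  rw [← ENNReal.ofReal_coe_nnreal, coe_nnnorm]
  exact ENNReal.ofReal_le_ofReal ht

theorem stmt_6_general (d : ℕ)
    (f : EuclideanSpace ℝ (Fin d) → EuclideanSpace ℝ (Fin d)) (hf : Continuous f)
    (hdiss : ∀ x : EuclideanSpace ℝ (Fin d), x ≠ 0 → 0 < (inner ℝ x (f x) : ℝ))
    (Y z : ℝ → EuclideanSpace ℝ (Fin d))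
    (hYlim : Tendsto Y atTop (nhds 0))
    (hz : ∀ t : ℝ, 0 ≤ t → HasDerivAt z (-f (z t + Y t) + Y t) t)
    (hliminf : liminf (fun t : ℝ => (‖z t‖₊ : ENNReal)) atTop < ⊤) :
    limsup (fun t : ℝ => (‖z t‖₊ : ENNReal)) atTop < ⊤ := by
  obtain ⟨r, hr, hfreq⟩ := exists_pos_frequently_norm_lt_of_liminf_nnnorm_lt_top hliminf
  obtain ⟨t₀, hzt₀, htrap⟩ :=
    (hfreq.and_eventually (eventually_forall_norm_le_of_norm_le hf hdiss hYlim hz hr)).exists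
  exact limsup_nnnorm_lt_top_of_eventually_norm_le
    (eventually_atTop.2 ⟨t₀, htrap hzt₀.le⟩)

theorem stmt_6 (d : ℕ) (hd : 1 ≤ d)
    (f : EuclideanSpace ℝ (Fin d) → EuclideanSpace ℝ (Fin d)) (hf : Continuous f)
    (hf0 : f 0 = 0)
    (hdiss : ∀ x : EuclideanSpace ℝ (Fin d), x ≠ 0 → 0 < (inner ℝ x (f x) : ℝ))
    (Y z : ℝ → EuclideanSpace ℝ (Fin d))
    (hY : ContinuousOn Y (Set.Ici 0)) (hYlim : Tendsto Y atTop (nhds 0))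
    (hz : ∀ t : ℝ, 0 ≤ t → HasDerivAt z (-f (z t + Y t) + Y t) t)
    (hliminf : liminf (fun t : ℝ => (‖z t‖₊ : ENNReal)) atTop < ⊤) :
    limsup (fun t : ℝ => (‖z t‖₊ : ENNReal)) atTop < ⊤ :=
  stmt_6_general d f hf hdiss Y z hYlim hz hliminf
end

section
/- Set X(t) = z(t) + Y(t). If liminf_{t→∞} ‖X(t)‖ < +∞, then lim_{t→∞} z(t) = 0 and lim_{t→∞} X(t) = 0. Consequently, either lim_{t→∞} X(t) = 0 or lim_{t→∞} ‖X(t)‖ = +∞. -/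
/-!
`V = ‖z‖²` is a Lyapunov function: `V' = -2⟪z, f (z + Y)⟫ + 2⟪z, Y⟫`. On an annulus
`ε ≤ ‖x‖ ≤ R`, compactness bounds `⟪x, f x⟫` below by some `δ > 0`, and this survives the
perturbation by `Y t` once `t` is large, so `V' ≤ -δ` on the annulus. Hence if `‖z‖ ≤ R` at one
late time, `V` never exceeds `R²`, drops below `ε²` in finite time and stays there. A finite
`liminf ‖X‖` provides such times for `R` large; otherwise `‖X‖ → ∞`.
-/

open Filter Set Topology
open scoped RealInnerProductSpace NNReal ENNReal

theorem le_of_hasDerivAt_neg_of_eq_level {V g : ℝ → ℝ} {a c : ℝ}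
    (hV : ∀ t, a ≤ t → HasDerivAt V (g t) t) (hg : ∀ t, a ≤ t → V t = c → g t < 0)
    (ha : V a ≤ c) {t : ℝ} (ht : a ≤ t) : V t ≤ c :=
  image_le_of_deriv_right_lt_deriv_boundary (B := fun _ ↦ c)
    (fun s hs ↦ (hV s hs.1).continuousAt.continuousWithinAt)
    (fun s hs ↦ (hV s hs.1).hasDerivWithinAt) ha (fun _ ↦ hasDerivAt_const _ c)
    (fun s hs ↦ hg s hs.1) ⟨ht, le_rfl⟩

theorem eventually_le_of_hasDerivAt_le_neg {V g : ℝ → ℝ} {a c C δ : ℝ} (hδ : 0 < δ)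
    (hcC : c ≤ C) (ha : V a ≤ C) (hV : ∀ t, a ≤ t → HasDerivAt V (g t) t)
    (hg : ∀ t, a ≤ t → c ≤ V t → V t ≤ C → g t ≤ -δ) : ∀ᶠ t in atTop, V t ≤ c := by
  have hC : ∀ t, a ≤ t → V t ≤ C := fun t ht ↦
    le_of_hasDerivAt_neg_of_eq_level hV
      (fun s hs hs' ↦ by linarith [hg s hs (hs' ▸ hcC) hs'.le]) ha ht
  set b := a + 2 * (C - c) / δ
  have hab : a ≤ b := le_add_of_nonneg_right (by have := sub_nonneg.2 hcC; positivity)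
  have hslope : δ / 2 * (b - a) = C - c := by
    simp only [b]; field_simp; ring
  -- `V` stays below the line of slope `-δ / 2` through `(a, C)`, which reaches `c` at time `b`.
  have hline : V b ≤ C - δ / 2 * (b - a) := by
    refine image_le_of_deriv_right_lt_deriv_boundary (B := fun t ↦ C - δ / 2 * (t - a))
      (fun s hs ↦ (hV s hs.1).continuousAt.continuousWithinAt)
      (fun s hs ↦ (hV s hs.1).hasDerivWithinAt) (by simpa using ha)
      (fun t ↦ ((hasDerivAt_id t).sub_const a |>.const_mul (δ / 2)).const_sub C) ?_ ⟨hab, le_rfl⟩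
    intro s ⟨has, hsb⟩ hVs
    have hcs : c ≤ V s := by
      rw [hVs]
      nlinarith [mul_le_mul_of_nonneg_left hsb.le (half_pos hδ).le]
    simp only [mul_one]
    linarith [hg s has hcs (hC s has)]
  have hb : V b ≤ c := by linarith
  filter_upwards [eventually_ge_atTop b] with t ht
  exact le_of_hasDerivAt_neg_of_eq_level (fun s hs ↦ hV s (hab.trans hs))
    (fun s hs hs' ↦ by linarith [hg s (hab.trans hs) hs'.ge (hC s (hab.trans hs))]) hb ht

section Dissipative

variable {E : Type*} [NormedAddCommGroup E] [InnerProductSpace ℝ E]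

theorem IsCompact.exists_pos_eventually_forall_inner_neg_le {f : E → E} (hf : Continuous f)
    {K : Set E} (hK : IsCompact K) (hpos : ∀ x ∈ K, 0 < ⟪x, f x⟫) :
    ∃ δ > 0, ∀ᶠ y in 𝓝 0, ∀ x ∈ K, ⟪x, -f (x + y) + y⟫ ≤ -δ := by
  obtain ⟨δ, hδ, hδK⟩ := hK.exists_forall_le' (continuous_id.inner hf).continuousOn hpos
  refine ⟨δ / 2, half_pos hδ, hK.eventually_forall_of_forall_eventually fun x hx ↦ ?_⟩
  have hψ : Continuous fun p : E × E ↦ ⟪p.2, -f (p.2 + p.1) + p.1⟫ := by fun_prop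
  have hx0 : ⟪x, -f (x + 0) + 0⟫ < -(δ / 2) := by
    simp only [add_zero, inner_neg_right]
    linarith [show δ ≤ ⟪x, f x⟫ from hδK x hx]
  exact (hψ.continuousAt.eventually_lt continuousAt_const hx0).mono fun _ h ↦ h.le

theorem tendsto_zero_of_frequently_norm_le [ProperSpace E] {f : E → E} (hf : Continuous f)
    (hdiss : ∀ x, x ≠ 0 → 0 < ⟪x, f x⟫) {Y z : ℝ → E} (hY : Tendsto Y atTop (𝓝 0))
    (hz : ∀ t, 0 ≤ t → HasDerivAt z (-f (z t + Y t) + Y t) t) {M : ℝ}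
    (hM : ∃ᶠ t in atTop, ‖z t‖ ≤ M) : Tendsto z atTop (𝓝 0) := by
  refine Metric.nhds_basis_closedBall.tendsto_right_iff.2 fun ε hε ↦ ?_
  set R := max M ε
  have hεR : ε ≤ R := le_max_right M ε
  have hR : 0 ≤ R := hε.le.trans hεR
  set K := Metric.closedBall (0 : E) R ∩ {x | ε ≤ ‖x‖}
  have hK : IsCompact K :=
    (isCompact_closedBall 0 R).inter_right (isClosed_le continuous_const continuous_norm)
  obtain ⟨δ, hδ, hδK⟩ := hK.exists_pos_eventually_forall_inner_neg_le hf
    fun x hx ↦ hdiss x (norm_pos_iff.1 (hε.trans_le hx.2))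
  obtain ⟨T, hT⟩ := eventually_atTop.1 ((eventually_ge_atTop 0).and (hY.eventually hδK))
  obtain ⟨a, haM, haT⟩ := (hM.and_eventually (eventually_ge_atTop T)).exists
  have hdecay : ∀ᶠ t in atTop, ‖z t‖ ^ 2 ≤ ε ^ 2 := by
    refine eventually_le_of_hasDerivAt_le_neg (mul_pos two_pos hδ)
      (pow_le_pow_left₀ hε.le hεR 2)
      ((sq_le_sq₀ (norm_nonneg _) hR).2 (haM.trans (le_max_left M ε)))
      (fun t ht ↦ (hz t (hT t (haT.trans ht)).1).norm_sq) fun t ht hεt htR ↦ ?_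
    have hzK : z t ∈ K := ⟨mem_closedBall_zero_iff.2 ((sq_le_sq₀ (norm_nonneg _) hR).1 htR),
      (sq_le_sq₀ hε.le (norm_nonneg _)).1 hεt⟩
    linarith [(hT t (haT.trans ht)).2 (z t) hzK]
  filter_upwards [hdecay] with t ht
  exact mem_closedBall_zero_iff.2 ((sq_le_sq₀ (norm_nonneg _) hε.le).1 ht)

end Dissipative

theorem Filter.exists_frequently_le_of_liminf_coe_lt_top {α : Type*} {l : Filter α} {u : α → ℝ≥0}
    (h : liminf (fun a ↦ (u a : ℝ≥0∞)) l < ⊤) : ∃ M : ℝ≥0, ∃ᶠ a in l, u a ≤ M := by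
  obtain ⟨r, hr, hrtop⟩ := exists_between h
  lift r to ℝ≥0 using hrtop.ne
  exact ⟨r, (frequently_lt_of_liminf_lt (by isBoundedDefault) hr).mono fun a ha ↦ by
    exact_mod_cast ha.le⟩

theorem stmt_8_general (d : ℕ)
    (f : EuclideanSpace ℝ (Fin d) → EuclideanSpace ℝ (Fin d)) (hf : Continuous f)
    (hdiss : ∀ x : EuclideanSpace ℝ (Fin d), x ≠ 0 → 0 < (inner ℝ x (f x) : ℝ))
    (Y z : ℝ → EuclideanSpace ℝ (Fin d))
    (hYlim : Tendsto Y atTop (nhds 0))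
    (hz : ∀ t : ℝ, 0 ≤ t → HasDerivAt z (-f (z t + Y t) + Y t) t) :
    ((liminf (fun t : ℝ => (‖z t + Y t‖₊ : ENNReal)) atTop < ⊤) →
      Tendsto z atTop (nhds 0) ∧ Tendsto (fun t : ℝ => z t + Y t) atTop (nhds 0)) ∧
    (Tendsto (fun t : ℝ => z t + Y t) atTop (nhds 0) ∨
      Tendsto (fun t : ℝ => ‖z t + Y t‖) atTop atTop) := by
  have hbounded : ∀ M : ℝ, (∃ᶠ t in atTop, ‖z t + Y t‖ ≤ M) →
      Tendsto z atTop (𝓝 0) ∧ Tendsto (fun t ↦ z t + Y t) atTop (𝓝 0) := by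
    intro M hM
    have hz0 : Tendsto z atTop (𝓝 0) := by
      refine tendsto_zero_of_frequently_norm_le hf hdiss hYlim hz (M := M + 1) ?_
      refine (hM.and_eventually (NormedAddGroup.tendsto_nhds_zero.1 hYlim 1 one_pos)).mono ?_
      rintro t ⟨hX, hYt⟩
      calc ‖z t‖ ≤ ‖z t + Y t‖ + ‖Y t‖ := by simpa using norm_sub_le (z t + Y t) (Y t)
        _ ≤ M + 1 := by linarith
    exact ⟨hz0, by simpa using hz0.add hYlim⟩
  refine ⟨fun h ↦ ?_, ?_⟩
  · obtain ⟨M, hM⟩ := exists_frequently_le_of_liminf_coe_lt_top h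
    exact hbounded M (hM.mono fun t ht ↦ by exact_mod_cast ht)
  by_cases h : ∃ M : ℝ, ∃ᶠ t in atTop, ‖z t + Y t‖ ≤ M
  · obtain ⟨M, hM⟩ := h
    exact Or.inl (hbounded M hM).2
  · simp only [not_exists, not_frequently, not_le] at h
    exact Or.inr (tendsto_atTop.2 fun M ↦ (h M).mono fun _ ht ↦ ht.le)

theorem stmt_8 (d : ℕ) (hd : 1 ≤ d)
    (f : EuclideanSpace ℝ (Fin d) → EuclideanSpace ℝ (Fin d)) (hf : Continuous f)
    (hf0 : f 0 = 0)
    (hdiss : ∀ x : EuclideanSpace ℝ (Fin d), x ≠ 0 → 0 < (inner ℝ x (f x) : ℝ))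
    (Y z : ℝ → EuclideanSpace ℝ (Fin d))
    (hY : ContinuousOn Y (Set.Ici 0)) (hYlim : Tendsto Y atTop (nhds 0))
    (hz : ∀ t : ℝ, 0 ≤ t → HasDerivAt z (-f (z t + Y t) + Y t) t) :
    ((liminf (fun t : ℝ => (‖z t + Y t‖₊ : ENNReal)) atTop < ⊤) →
      Tendsto z atTop (nhds 0) ∧ Tendsto (fun t : ℝ => z t + Y t) atTop (nhds 0)) ∧
    (Tendsto (fun t : ℝ => z t + Y t) atTop (nhds 0) ∨
      Tendsto (fun t : ℝ => ‖z t + Y t‖) atTop atTop) :=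
  stmt_8_general d f hf hdiss Y z hYlim hz
end

section
/- Suppose there exists h > 0 such that lim_{n→∞} (∫_{nh}^{(n+1)h} ‖σ(s)‖_F² ds) · log n = 0. Then S_h'(ε) < +∞ for all ε > 0. -/
open MeasureTheory Filter

theorem stmt_10 (d r : ℕ) (hd : 1 ≤ d) (hr : 1 ≤ r)
    (σ : ℝ → Matrix (Fin d) (Fin r) ℝ) (hσ : ContinuousOn σ (Set.Ici 0))
    (h : ℝ) (hh : 0 < h)
    (hlim : Tendsto (fun n : ℕ => theta2 σ h n * Real.log n) atTop (nhds 0)) :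
    ∀ ε : ℝ, 0 < ε → SFinite σ h ε := by
  intro ε hε
  have hθ : ∀ n : ℕ, 0 ≤ theta2 σ h n := by
    intro n
    apply intervalIntegral.integral_nonneg
    · nlinarith [hh.le]
    · intro s _
      unfold F2
      positivity
  have hlt : ∀ᶠ n : ℕ in atTop, theta2 σ h n * Real.log n < ε ^ 2 / 4 :=
    hlim.eventually (gt_mem_nhds (by positivity))
  have hbig : ∀ᶠ n : ℕ in atTop,
      ‖Sterm σ h ε n‖ ≤ (ε / 2) * ‖(n : ℝ) ^ (-2 : ℝ)‖ := by
    filter_upwards [hlt, eventually_ge_atTop 3] with n hn hn3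
    have hnpos : (0 : ℝ) < n := by
      have : (3 : ℝ) ≤ n := by exact_mod_cast hn3
      linarith
    have hlog1 : 1 ≤ Real.log n := by
      rw [Real.le_log_iff_exp_le hnpos]
      have h1 : Real.exp 1 < 2.7182818286 := Real.exp_one_lt_d9
      have h2 : (3 : ℝ) ≤ n := by exact_mod_cast hn3
      linarith
    have hrpow : (n : ℝ) ^ (-2 : ℝ) = Real.exp (-2 * Real.log n) := by
      rw [Real.rpow_def_of_pos hnpos]; ring_nf
    have hrpow_nonneg : 0 ≤ (n : ℝ) ^ (-2 : ℝ) := by positivity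
    rw [Real.norm_eq_abs, Real.norm_eq_abs, abs_of_nonneg hrpow_nonneg]
    by_cases h0 : theta2 σ h n = 0
    · rw [Sterm, if_pos h0]
      simp only [abs_zero]
      positivity
    · have hpos : 0 < theta2 σ h n := lt_of_le_of_ne (hθ n) (Ne.symm h0)
      have hkey : theta2 σ h n * (4 * Real.log n) < ε ^ 2 := by nlinarith
      have hθle : theta2 σ h n ≤ (ε / 2) ^ 2 := by nlinarith
      have hsq : Real.sqrt (theta2 σ h n) ≤ ε / 2 := by
        calc Real.sqrt (theta2 σ h n) ≤ Real.sqrt ((ε / 2) ^ 2) :=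
              Real.sqrt_le_sqrt hθle
          _ = ε / 2 := Real.sqrt_sq (by positivity)
      have hexp : Real.exp (-(ε ^ 2) / (2 * theta2 σ h n)) ≤
          Real.exp (-2 * Real.log n) := by
        apply Real.exp_le_exp.mpr
        rw [div_le_iff₀ (by positivity)]
        nlinarith
      rw [Sterm, if_neg h0,
        abs_of_nonneg (mul_nonneg (Real.sqrt_nonneg _) (Real.exp_pos _).le), hrpow]
      exact mul_le_mul hsq hexp (Real.exp_pos _).le (by positivity)
  have hsum : Summable (fun n : ℕ => Sterm σ h ε n) := by
    apply summable_of_isBigO_nat (Real.summable_nat_rpow.mpr (by norm_num : (-2 : ℝ) < -1))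
    exact Asymptotics.IsBigO.of_bound (ε / 2) hbig
  exact (summable_nat_add_iff 1).mpr hsum
end

section
/- Suppose there exist h > 0 and L_h ∈ (0,∞) such that lim_{n→∞} (∫_{nh}^{(n+1)h} ‖σ(s)‖_F² ds) · log n = L_h. Then there exists ε' > 0 such that S_h'(ε) < +∞ for all ε > ε' and S_h'(ε) = +∞ for all ε with 0 < ε < ε'. -/
open MeasureTheory Filter

/-!
With `t n = θ_h(n)²` we have `t n ≈ L / log n`, so `exp (-ε² / (2 t n)) ≈ n ^ (-ε² / (2L))`, while
`√(t n)` lies between a negative power `n ^ (-s)` (any `s > 0`) and `1`. Hence `S_h'(ε)` is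
comparable to `∑ n ^ (-p)` with `p` slightly above `ε² / (2L)` from either side, and the threshold
is `ε' = √(2L)`.
-/

open Real Topology

noncomputable def gaussTailTerm (ε t : ℝ) : ℝ :=
  if t = 0 then 0 else √t * exp (-(ε ^ 2) / (2 * t))

lemma gaussTailTerm_nonneg (ε t : ℝ) : 0 ≤ gaussTailTerm ε t := by
  unfold gaussTailTerm
  split_ifs <;> positivity

lemma gaussTailTerm_le_rpow_neg {ε t p x : ℝ} (hx : 0 < x) (ht : t ≤ 1)
    (hp : 2 * p * (t * log x) ≤ ε ^ 2) : gaussTailTerm ε t ≤ x ^ (-p) := by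
  unfold gaussTailTerm
  split_ifs with ht0
  · positivity
  rcases (Ne.lt_or_gt ht0) with htneg | htpos
  · rw [sqrt_eq_zero_of_nonpos htneg.le, zero_mul]
    positivity
  have hexp : exp (-(ε ^ 2) / (2 * t)) ≤ x ^ (-p) := by
    rw [rpow_def_of_pos hx, exp_le_exp, div_le_iff₀ (by positivity)]
    linarith
  calc √t * exp (-(ε ^ 2) / (2 * t)) ≤ 1 * x ^ (-p) :=
        mul_le_mul (sqrt_le_one.mpr ht) hexp (exp_nonneg _) zero_le_one
    _ = x ^ (-p) := one_mul _

lemma rpow_neg_le_gaussTailTerm {ε t p s x : ℝ} (hx : 0 < x) (ht : x ^ (-s) ≤ t)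
    (hp : ε ^ 2 ≤ 2 * p * (t * log x)) : x ^ (-(p + s / 2)) ≤ gaussTailTerm ε t := by
  have htpos : 0 < t := lt_of_lt_of_le (rpow_pos_of_pos hx _) ht
  rw [gaussTailTerm, if_neg htpos.ne']
  have hsqrt : x ^ (-s / 2) ≤ √t := by
    rw [div_eq_mul_one_div, rpow_mul hx.le, ← sqrt_eq_rpow]
    exact sqrt_le_sqrt ht
  have hexp : x ^ (-p) ≤ exp (-(ε ^ 2) / (2 * t)) := by
    rw [rpow_def_of_pos hx, exp_le_exp, le_div_iff₀ (by positivity)]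
    linarith
  calc x ^ (-(p + s / 2)) = x ^ (-s / 2) * x ^ (-p) := by
        rw [← rpow_add hx]; ring_nf
    _ ≤ √t * exp (-(ε ^ 2) / (2 * t)) := by gcongr

section LogScaled

variable {t : ℕ → ℝ} {L : ℝ}

lemma tendsto_zero_of_tendsto_mul_log (ht : Tendsto (fun n : ℕ => t n * log n) atTop (𝓝 L)) :
    Tendsto t atTop (𝓝 0) := by
  have hlog : Tendsto (fun n : ℕ => log n) atTop atTop :=
    tendsto_log_atTop.comp tendsto_natCast_atTop_atTop
  have := ht.mul hlog.inv_tendsto_atTop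
  rw [mul_zero] at this
  refine this.congr' ?_
  filter_upwards [hlog.eventually_gt_atTop 0] with n hn
  simp only [Pi.inv_apply]
  field_simp

lemma eventually_rpow_neg_le_of_tendsto_mul_log (hL : 0 < L)
    (ht : Tendsto (fun n : ℕ => t n * log n) atTop (𝓝 L)) {s : ℝ} (hs : 0 < s) :
    ∀ᶠ n : ℕ in atTop, (n : ℝ) ^ (-s) ≤ t n := by
  have hlog_le : ∀ᶠ x : ℝ in atTop, log x ≤ L / 2 * x ^ s := by
    filter_upwards [(isLittleO_log_rpow_atTop hs).bound (half_pos hL), eventually_gt_atTop 1]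
      with x hx hx1
    rwa [norm_of_nonneg (log_nonneg hx1.le), norm_of_nonneg (by positivity)] at hx
  filter_upwards [tendsto_natCast_atTop_atTop.eventually hlog_le,
    tendsto_natCast_atTop_atTop.eventually (eventually_gt_atTop (1 : ℝ)),
    ht.eventually_const_lt (half_lt_self hL)] with n hlog_n hn1 hLt
  have hn0 : (0 : ℝ) < n := by linarith
  have hlog_pos : 0 < log n := log_pos hn1
  refine le_of_mul_le_mul_right ?_ hlog_pos
  calc (n : ℝ) ^ (-s) * log n ≤ (n : ℝ) ^ (-s) * (L / 2 * (n : ℝ) ^ s) := by gcongr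
    _ = L / 2 := by rw [mul_left_comm, ← rpow_add hn0, neg_add_cancel, rpow_zero, mul_one]
    _ ≤ t n * log n := hLt.le

theorem summable_gaussTailTerm_of_tendsto_mul_log (hL : 0 < L)
    (ht : Tendsto (fun n : ℕ => t n * log n) atTop (𝓝 L)) {ε : ℝ} (hε : 2 * L < ε ^ 2) :
    Summable fun n => gaussTailTerm ε (t n) := by
  obtain ⟨p, hp1, hpε⟩ := exists_between ((one_lt_div (by positivity)).mpr hε)
  have hpL : 2 * p * L < ε ^ 2 := by linarith [(lt_div_iff₀ (by positivity)).mp hpε]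
  refine (summable_nat_rpow.mpr (neg_lt_neg hp1)).of_norm_bounded_eventually_nat ?_
  filter_upwards [(tendsto_zero_of_tendsto_mul_log ht).eventually_le_const one_pos,
    (ht.const_mul (2 * p)).eventually_lt_const hpL, eventually_gt_atTop 0] with n ht1 htlog hn
  rw [norm_of_nonneg (gaussTailTerm_nonneg _ _)]
  exact gaussTailTerm_le_rpow_neg (by exact_mod_cast hn) ht1 htlog.le

theorem not_summable_gaussTailTerm_of_tendsto_mul_log (hL : 0 < L)
    (ht : Tendsto (fun n : ℕ => t n * log n) atTop (𝓝 L)) {ε : ℝ} (hε : ε ^ 2 < 2 * L) :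
    ¬ Summable fun n => gaussTailTerm ε (t n) := by
  obtain ⟨p, hεp, hp1⟩ := exists_between ((div_lt_one (by positivity)).mpr hε)
  have hpL : ε ^ 2 < 2 * p * L := by linarith [(div_lt_iff₀ (by positivity)).mp hεp]
  intro hsum
  have hrpow : Summable fun n : ℕ => (n : ℝ) ^ (-(p + (1 - p) / 2)) := by
    refine hsum.of_norm_bounded_eventually_nat ?_
    filter_upwards [eventually_rpow_neg_le_of_tendsto_mul_log hL ht (sub_pos.mpr hp1),
      (ht.const_mul (2 * p)).eventually_const_lt hpL, eventually_gt_atTop 0] with n htn htlog hn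
    rw [norm_of_nonneg (by positivity)]
    exact rpow_neg_le_gaussTailTerm (by exact_mod_cast hn) htn htlog.le
  have := summable_nat_rpow.mp hrpow
  linarith

end LogScaled

lemma sFinite_iff_summable_gaussTailTerm {d r : ℕ} (σ : ℝ → Matrix (Fin d) (Fin r) ℝ) (h ε : ℝ) :
    SFinite σ h ε ↔ Summable fun n => gaussTailTerm ε (theta2 σ h n) :=
  summable_nat_add_iff 1

theorem stmt_11_general (d r : ℕ)
    (σ : ℝ → Matrix (Fin d) (Fin r) ℝ)
    (h L : ℝ) (hL : 0 < L)
    (hlim : Tendsto (fun n : ℕ => theta2 σ h n * Real.log n) atTop (nhds L)) :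
    ∃ ε' : ℝ, 0 < ε' ∧ (∀ ε : ℝ, ε' < ε → SFinite σ h ε) ∧
      (∀ ε : ℝ, 0 < ε → ε < ε' → ¬ SFinite σ h ε) := by
  refine ⟨√(2 * L), by positivity, fun ε hε => ?_, fun ε hε0 hε => ?_⟩
  · have hε2 : 2 * L < ε ^ 2 := (sqrt_lt' ((sqrt_nonneg _).trans_lt hε)).mp hε
    exact (sFinite_iff_summable_gaussTailTerm σ h ε).mpr
      (summable_gaussTailTerm_of_tendsto_mul_log hL hlim hε2)
  · have hε2 : ε ^ 2 < 2 * L := (lt_sqrt hε0.le).mp hε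
    exact fun hS => not_summable_gaussTailTerm_of_tendsto_mul_log hL hlim hε2
      ((sFinite_iff_summable_gaussTailTerm σ h ε).mp hS)

theorem stmt_11 (d r : ℕ) (hd : 1 ≤ d) (hr : 1 ≤ r)
    (σ : ℝ → Matrix (Fin d) (Fin r) ℝ) (hσ : ContinuousOn σ (Set.Ici 0))
    (h L : ℝ) (hh : 0 < h) (hL : 0 < L)
    (hlim : Tendsto (fun n : ℕ => theta2 σ h n * Real.log n) atTop (nhds L)) :
    ∃ ε' : ℝ, 0 < ε' ∧ (∀ ε : ℝ, ε' < ε → SFinite σ h ε) ∧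
      (∀ ε : ℝ, 0 < ε → ε < ε' → ¬ SFinite σ h ε) :=
  stmt_11_general d r σ h L hL hlim
end

section
/- Let φ₁ : [0,∞) → [0,∞) be continuous with φ₁(x) → +∞ as x → ∞, and let c₁ ≥ 0. Then there exists M > 0, depending only on φ₁ and c₁, with the following property: for every continuous y : [0,∞) → ℝ with limsup_{t→∞} |y(t)| ≤ c₁, every continuous g : [0,∞) → [0,∞) with lim_{t→∞} ∫_t^{t+1} g(s) ds = 0, and every continuously differentiable w : [0,∞) → ℝ satisfying w(t) + y(t) > 0 for all t ≥ 0, w'(t) = −φ₁(w(t) + y(t)) + g(t)/(w(t) + y(t)) + y(t) for all t ≥ 0, and liminf_{t→∞} w(t) < +∞, one has limsup_{t→∞} w(t) ≤ M. -/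
open Filter MeasureTheory

theorem stmt_18 (φ₁ : ℝ → ℝ) (hφcont : ContinuousOn φ₁ (Set.Ici 0))
    (hφnonneg : ∀ x : ℝ, 0 ≤ x → 0 ≤ φ₁ x)
    (hφtop : Tendsto φ₁ atTop atTop)
    (c₁ : ℝ) (hc₁ : 0 ≤ c₁) :
    ∃ M : ℝ, 0 < M ∧ ∀ y g w : ℝ → ℝ,
      ContinuousOn y (Set.Ici 0) →
      -- limsup_{t→∞} |y(t)| ≤ c₁
      (∀ ε : ℝ, 0 < ε → ∀ᶠ t : ℝ in atTop, |y t| ≤ c₁ + ε) →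
      ContinuousOn g (Set.Ici 0) → (∀ t : ℝ, 0 ≤ t → 0 ≤ g t) →
      Tendsto (fun t : ℝ => ∫ s in t..(t + 1), g s) atTop (nhds 0) →
      (∀ t : ℝ, 0 ≤ t → 0 < w t + y t) →
      (∀ t : ℝ, 0 ≤ t →
        HasDerivAt w (-φ₁ (w t + y t) + g t / (w t + y t) + y t) t) →
      -- liminf_{t→∞} w(t) < +∞
      (∃ C : ℝ, ∃ᶠ t : ℝ in atTop, w t ≤ C) →
      -- limsup_{t→∞} w(t) ≤ M
      (∀ ε : ℝ, 0 < ε → ∀ᶠ t : ℝ in atTop, w t ≤ M + ε) := by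
  -- Choose A₀ so that φ₁ x ≥ c₁ + 2 for x ≥ A₀.
  obtain ⟨A₀, hA₀⟩ := eventually_atTop.mp (hφtop.eventually_ge_atTop (c₁ + 2))
  set A : ℝ := max A₀ 1 with hAdef
  have hA1 : (1 : ℝ) ≤ A := le_max_right _ _
  have hAA₀ : A₀ ≤ A := le_max_left _ _
  set B : ℝ := A + c₁ + 1 with hBdef
  refine ⟨A + c₁ + 2, by linarith, ?_⟩
  intro y g w hycont hy hgcont hgnn hgtend hpos hw' hfreq ε hε
  -- Choose T beyond which |y| ≤ c₁ + 1 and ∫_t^{t+1} g ≤ 1/2.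
  obtain ⟨T₁, hT₁⟩ := eventually_atTop.mp (hy 1 one_pos)
  obtain ⟨T₂, hT₂⟩ := eventually_atTop.mp
    (hgtend.eventually (eventually_lt_nhds (by norm_num : (0:ℝ) < 1/2)))
  set T : ℝ := max (max T₁ T₂) 0 with hTdef
  have hT0 : (0 : ℝ) ≤ T := le_max_right _ _
  have hTy : ∀ r, T ≤ r → |y r| ≤ c₁ + 1 := fun r hr =>
    hT₁ r (le_trans (le_trans (le_max_left _ _) (le_max_left _ _)) hr)
  have hTg : ∀ r, T ≤ r → (∫ s in r..(r + 1), g s) ≤ 1 / 2 := fun r hr =>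
    (hT₂ r (le_trans (le_trans (le_max_right _ _) (le_max_left _ _)) hr)).le
  -- continuity of w and of the derivative expression
  have hwca : ∀ t : ℝ, 0 ≤ t → ContinuousAt w t := fun t ht => (hw' t ht).continuousAt
  have hwcont : ContinuousOn w (Set.Ici 0) := fun x hx => (hwca x hx).continuousWithinAt
  set d : ℝ → ℝ := fun t => -φ₁ (w t + y t) + g t / (w t + y t) + y t with hddef
  have hwy : ContinuousOn (fun t => w t + y t) (Set.Ici 0) := hwcont.add hycont
  have hdcont : ContinuousOn d (Set.Ici 0) := by
    refine ContinuousOn.add (ContinuousOn.add ?_ ?_) hycont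
    · exact (hφcont.comp hwy fun t ht => (hpos t ht).le).neg
    · exact hgcont.div hwy fun t ht => (hpos t ht).ne'
  -- FTC
  have hFTC : ∀ u t : ℝ, 0 ≤ u → u ≤ t → (∫ r in u..t, d r) = w t - w u := by
    intro u t hu hut
    have hsub : Set.uIcc u t ⊆ Set.Ici 0 := by
      rw [Set.uIcc_of_le hut]
      exact fun x hx => le_trans hu hx.1
    exact intervalIntegral.integral_eq_sub_of_hasDerivAt
      (fun x hx => hw' x (hsub hx)) ((hdcont.mono hsub).intervalIntegrable)
  -- Key one-step estimate
  have key : ∀ u t : ℝ, T ≤ u → u ≤ t → t ≤ u + 1 →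
      (∀ r ∈ Set.Icc u t, B ≤ w r) → w t ≤ w u - (t - u) + 1 / 2 := by
    intro u t huT hut ht1 hB
    have hu0 : (0 : ℝ) ≤ u := le_trans hT0 huT
    have hsub : Set.uIcc u t ⊆ Set.Ici 0 := by
      rw [Set.uIcc_of_le hut]; exact fun x hx => le_trans hu0 hx.1
    have hdint : IntervalIntegrable d volume u t := (hdcont.mono hsub).intervalIntegrable
    have hgci : ContinuousOn g (Set.uIcc u t) := hgcont.mono hsub
    have hgint : IntervalIntegrable g volume u t := hgci.intervalIntegrable
    have hgint2 : IntervalIntegrable g volume u (u + 1) := by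
      refine (hgcont.mono ?_).intervalIntegrable
      rw [Set.uIcc_of_le (by linarith)]
      exact fun x hx => le_trans hu0 hx.1
    have hcint : IntervalIntegrable (fun r : ℝ => -1 + g r) volume u t :=
      (intervalIntegrable_const).add hgint
    -- pointwise bound d r ≤ -1 + g r on [u, t]
    have hpt : ∀ r ∈ Set.Icc u t, d r ≤ -1 + g r := by
      intro r hr
      have hr0 : (0 : ℝ) ≤ r := le_trans hu0 hr.1
      have hrT : T ≤ r := le_trans huT hr.1
      have hyr := hTy r hrT
      have hyr' := abs_le.mp hyr
      have hwB : B ≤ w r := hB r hr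
      have hxA : A ≤ w r + y r := by simp only [hBdef] at hwB; linarith [hyr'.1]
      have hx1 : (1 : ℝ) ≤ w r + y r := le_trans hA1 hxA
      have hφr : c₁ + 2 ≤ φ₁ (w r + y r) := hA₀ _ (le_trans hAA₀ hxA)
      have hdiv : g r / (w r + y r) ≤ g r := div_le_self (hgnn r hr0) hx1
      simp only [hddef]
      linarith [hyr'.2]
    have hmono : (∫ r in u..t, d r) ≤ ∫ r in u..t, -1 + g r :=
      intervalIntegral.integral_mono_on hut hdint hcint hpt
    have hsplit : (∫ r in u..t, (-1 : ℝ) + g r) = -(t - u) + ∫ r in u..t, g r := by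
      rw [intervalIntegral.integral_add intervalIntegrable_const hgint,
        intervalIntegral.integral_const]
      simp [smul_eq_mul]
    have hgmono : (∫ r in u..t, g r) ≤ ∫ r in u..(u + 1), g r := by
      refine intervalIntegral.integral_mono_interval le_rfl hut ht1 ?_ hgint2
      refine ae_restrict_of_forall_mem measurableSet_Ioc ?_
      intro x hx
      exact hgnn x (le_trans hu0 hx.1.le)
    have hghalf : (∫ r in u..(u + 1), g r) ≤ 1 / 2 := hTg u huT
    have := hFTC u t hu0 hut
    linarith
  -- There exists s ≥ T with w s ≤ B.
  obtain ⟨C, hC⟩ := hfreq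
  obtain ⟨s₀, hws₀, hs₀T⟩ := (hC.and_eventually (eventually_ge_atTop T)).exists
  have hex : ∃ s, T ≤ s ∧ w s ≤ B := by
    by_contra hcon
    push_neg at hcon
    have hbig : ∀ r, T ≤ r → B < w r := fun r hr => hcon r hr
    have hind : ∀ n : ℕ, w (s₀ + n) ≤ max C B - n / 2 := by
      intro n
      induction n with
      | zero => simpa using le_trans hws₀ (le_max_left _ _)
      | succ k ih =>
        have hkT : T ≤ s₀ + (k:ℝ) := le_trans hs₀T (le_add_of_nonneg_right (Nat.cast_nonneg k))
        have hstep := key (s₀ + k) (s₀ + k + 1) hkT (by linarith) (by linarith)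
          (fun r hr => (hbig r (le_trans hkT hr.1)).le)
        push_cast
        rw [show s₀ + ((k:ℝ) + 1) = s₀ + (k:ℝ) + 1 by ring]
        linarith
    obtain ⟨n, hn⟩ := exists_nat_gt (2 * (max C B - B))
    have h1 := hind n
    have h2 := hbig (s₀ + (n:ℝ)) (le_trans hs₀T (le_add_of_nonneg_right (Nat.cast_nonneg n)))
    linarith
  obtain ⟨s, hsT, hsB⟩ := hex
  have hs0 : (0 : ℝ) ≤ s := le_trans hT0 hsT
  -- Main invariance: w t ≤ B + 1/2 for all t ≥ s.
  have main : ∀ t, s ≤ t → w t ≤ B + 1 / 2 := by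
    intro t ht
    by_contra hlt
    push_neg at hlt
    set S : Set ℝ := {r ∈ Set.Icc s t | w r ≤ B} with hSdef
    have hSsub : S ⊆ Set.Icc s t := fun r hr => hr.1
    have hwIcc : ContinuousOn w (Set.Icc s t) :=
      hwcont.mono (fun x hx => le_trans hs0 hx.1)
    have hScl : IsClosed S := by
      have : S = Set.Icc s t ∩ w ⁻¹' Set.Iic B := by
        ext r; simp [hSdef, Set.mem_setOf_eq, and_comm]
      rw [this]
      exact hwIcc.preimage_isClosed_of_isClosed isClosed_Icc isClosed_Iic
    have hScomp : IsCompact S := isCompact_Icc.of_isClosed_subset hScl hSsub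
    have hSne : S.Nonempty := ⟨s, Set.left_mem_Icc.mpr ht, hsB⟩
    set u : ℝ := sSup S with hudef
    have huS : u ∈ S := hScomp.sSup_mem hSne
    have hub : ∀ r ∈ S, r ≤ u := fun r hr => le_csSup hScomp.bddAbove hr
    have huIcc : u ∈ Set.Icc s t := huS.1
    have hwuB : w u ≤ B := huS.2
    have huT : T ≤ u := le_trans hsT huIcc.1
    have habove : ∀ r, u < r → r ≤ t → B < w r := by
      intro r h1 h2
      by_contra hwr
      push_neg at hwr
      have : r ∈ S := ⟨⟨le_trans huIcc.1 h1.le, h2⟩, hwr⟩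
      exact absurd (hub r this) (not_le.mpr h1)
    have hut : u < t := by
      rcases lt_or_eq_of_le huIcc.2 with h | h
      · exact h
      · exfalso; rw [h] at hwuB; linarith
    have hBu : B ≤ w u := by
      by_contra hwu
      push_neg at hwu
      have hIVT := intermediate_value_Icc hut.le (hwIcc.mono (Set.Icc_subset_Icc_left huIcc.1))
      have hBmem : B ∈ Set.Icc (w u) (w t) := ⟨hwu.le, by linarith⟩
      obtain ⟨r, hr, hwr⟩ := hIVT hBmem
      rcases eq_or_lt_of_le hr.1 with h | h
      · rw [← h] at hwr; linarith
      · exact absurd hwr (ne_of_gt (habove r h hr.2))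
    have hBr : ∀ r ∈ Set.Icc u t, B ≤ w r := by
      intro r hr
      rcases eq_or_lt_of_le hr.1 with h | h
      · rwa [← h]
      · exact (habove r h hr.2).le
    rcases le_or_gt t (u + 1) with hcase | hcase
    · have := key u t huT hut.le hcase hBr
      have : w t ≤ B + 1 / 2 := by linarith [hut.le, sub_nonneg.mpr hut.le]
      linarith
    · have hstep := key u (u + 1) huT (by linarith) le_rfl
        (fun r hr => hBr r ⟨hr.1, le_trans hr.2 hcase.le⟩)
      have h2 := habove (u + 1) (by linarith) (by linarith)
      linarith
  filter_upwards [eventually_ge_atTop s] with t ht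
  have := main t ht
  simp only [hBdef] at this
  linarith
end

section
/- Let X : [0,∞) → ℝ^d be continuous and bounded, and suppose lim_{t→∞} (1/t) ∫_0^t ⟨X(s), f(X(s))⟩ ds = 0. Then liminf_{t→∞} ‖X(t)‖ = 0. -/
/-!
If `‖X t‖` does not come arbitrarily close to `0`, then from some time on `X` stays in a compact
annulus `ε ≤ ‖x‖ ≤ C`, on which the continuous function `⟨x, f x⟩` is bounded below by some
`δ > 0`. The time averages of `⟨X, f X⟩` are then eventually close to at least `δ`, so they cannot
tend to `0`.
-/

open Filter MeasureTheory Topology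

theorem le_of_tendsto_intervalIntegral_average {h : ℝ → ℝ} {a δ : ℝ}
    (hint : ∀ᶠ t in atTop, IntervalIntegrable h volume 0 t) (hδ : ∀ᶠ s in atTop, δ ≤ h s)
    (ha : Tendsto (fun t => (1 / t) * ∫ s in (0 : ℝ)..t, h s) atTop (𝓝 a)) : δ ≤ a := by
  obtain ⟨T, hT⟩ := eventually_atTop.1 (hint.and hδ)
  set c := ∫ s in (0 : ℝ)..T, h s
  have hlower : ∀ t, T ≤ t → c + δ * (t - T) ≤ ∫ s in (0 : ℝ)..t, h s := by
    intro t ht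
    have hTt : IntervalIntegrable h volume T t := (hT T le_rfl).1.symm.trans (hT t ht).1
    have hmono : ∫ _ in T..t, δ ≤ ∫ s in T..t, h s :=
      intervalIntegral.integral_mono_on ht intervalIntegrable_const hTt
        fun s hs => (hT s hs.1).2
    rw [← intervalIntegral.integral_add_adjacent_intervals (hT T le_rfl).1 hTt]
    simp only [intervalIntegral.integral_const, smul_eq_mul] at hmono
    linarith
  have hφ : Tendsto (fun t : ℝ => δ + (c - δ * T) / t) atTop (𝓝 δ) := by
    simpa using tendsto_const_nhds.add
      ((tendsto_const_nhds (x := c - δ * T)).div_atTop tendsto_id)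
  refine le_of_tendsto_of_tendsto hφ ha ?_
  filter_upwards [eventually_ge_atTop T, eventually_gt_atTop 0] with t hTt ht
  calc δ + (c - δ * T) / t = (1 / t) * (c + δ * (t - T)) := by field_simp; ring
    _ ≤ (1 / t) * ∫ s in (0 : ℝ)..t, h s := by gcongr; exact hlower t hTt

theorem exists_pos_le_of_pos_of_norm_mem_Icc {E : Type*} [NormedAddCommGroup E] [ProperSpace E]
    {g : E → ℝ} (hg : Continuous g) (hpos : ∀ x, x ≠ 0 → 0 < g x) {ε : ℝ} (hε : 0 < ε)
    (C : ℝ) : ∃ δ > 0, ∀ x, ε ≤ ‖x‖ → ‖x‖ ≤ C → δ ≤ g x := by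
  have hK : IsCompact (Metric.closedBall (0 : E) C \ Metric.ball 0 ε) :=
    (isCompact_closedBall 0 C).diff Metric.isOpen_ball
  obtain ⟨δ, hδ, hle⟩ := hK.exists_forall_le' hg.continuousOn fun x hx =>
    hpos x (ne_zero_of_norm_ne_zero ((hε.trans_le (by simpa using hx.2)).ne'))
  exact ⟨δ, hδ, fun x hεx hxC => hle x ⟨by simpa using hxC, by simpa using hεx⟩⟩

theorem liminf_eq_zero_of_frequently_le {α : Type*} {l : Filter α} [l.NeBot] {u : α → ℝ}
    (h0 : ∀ᶠ t in l, 0 ≤ u t) (hbdd : IsBoundedUnder (· ≤ ·) l u)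
    (hsmall : ∀ ε > 0, ∃ᶠ t in l, u t ≤ ε) : liminf u l = 0 :=
  le_antisymm
    (le_of_forall_pos_le_add fun ε hε => by
      simpa using liminf_le_of_frequently_le (hsmall ε hε) (isBoundedUnder_of_eventually_ge h0))
    (le_liminf_of_le hbdd.isCoboundedUnder_ge h0)

theorem stmt_19_general (d : ℕ)
    (f : EuclideanSpace ℝ (Fin d) → EuclideanSpace ℝ (Fin d)) (hf : Continuous f)
    (hdiss : ∀ x : EuclideanSpace ℝ (Fin d), x ≠ 0 → 0 < (inner ℝ x (f x) : ℝ))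
    (X : ℝ → EuclideanSpace ℝ (Fin d)) (hX : ContinuousOn X (Set.Ici 0))
    (hbdd : ∃ C : ℝ, ∀ t : ℝ, 0 ≤ t → ‖X t‖ ≤ C)
    (havg : Tendsto
      (fun t : ℝ => (1 / t) * ∫ s in (0 : ℝ)..t, (inner ℝ (X s) (f (X s)) : ℝ))
      atTop (nhds 0)) :
    liminf (fun t : ℝ => ‖X t‖) atTop = 0 := by
  have hg : Continuous fun x : EuclideanSpace ℝ (Fin d) => (inner ℝ x (f x) : ℝ) :=
    continuous_id.inner hf
  obtain ⟨C, hC⟩ := hbdd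
  refine liminf_eq_zero_of_frequently_le (.of_forall fun _ => norm_nonneg _)
    (isBoundedUnder_of_eventually_le (eventually_atTop.2 ⟨0, hC⟩)) fun ε hε => ?_
  by_contra hfar
  simp only [not_frequently, not_le] at hfar
  obtain ⟨δ, hδ, hδle⟩ := exists_pos_le_of_pos_of_norm_mem_Icc hg hdiss hε C
  have hint : ∀ᶠ t in atTop,
      IntervalIntegrable (fun s => (inner ℝ (X s) (f (X s)) : ℝ)) volume 0 t := by
    filter_upwards [eventually_ge_atTop 0] with t ht
    refine (hg.comp_continuousOn hX |>.mono ?_).intervalIntegrable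
    simpa [Set.uIcc_of_le ht] using Set.Icc_subset_Ici_self
  have hδ_nonpos : δ ≤ 0 := le_of_tendsto_intervalIntegral_average hint
    (by filter_upwards [hfar, eventually_ge_atTop 0] with t hεt ht using hδle _ hεt.le (hC t ht))
    havg
  exact hδ.not_ge hδ_nonpos

theorem stmt_19 (d : ℕ) (hd : 1 ≤ d)
    (f : EuclideanSpace ℝ (Fin d) → EuclideanSpace ℝ (Fin d)) (hf : Continuous f)
    (hf0 : f 0 = 0)
    (hdiss : ∀ x : EuclideanSpace ℝ (Fin d), x ≠ 0 → 0 < (inner ℝ x (f x) : ℝ))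
    (X : ℝ → EuclideanSpace ℝ (Fin d)) (hX : ContinuousOn X (Set.Ici 0))
    (hbdd : ∃ C : ℝ, ∀ t : ℝ, 0 ≤ t → ‖X t‖ ≤ C)
    (havg : Tendsto
      (fun t : ℝ => (1 / t) * ∫ s in (0 : ℝ)..t, (inner ℝ (X s) (f (X s)) : ℝ))
      atTop (nhds 0)) :
    liminf (fun t : ℝ => ‖X t‖) atTop = 0 :=
  stmt_19_general d f hf hdiss X hX hbdd havg
end
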